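/- arXiv:2407.01602 — 6 statements merged into one kernel-verified Lean document; each statement's English description precedes it below -/
import Mathlib

section
/- If the initial token values z_1^0, …, z_n^0 ∈ ℝ^d are pairwise distinct, then for every time k ∈ ℕ the token values z_1^k, …, z_n^k are pairwise distinct; i.e., z_i^k ≠ z_j^k for all i ≠ j and all k ∈ ℕ. -/
open scoped RealInnerProductSpace BigOperators Classical

noncomputable section

/-- The hardmax attention (argmax) index set `C_i` for token configuration `z`
(with attention matrix `A = I`). -/
def attn {d n : ℕ} (z : Fin n → EuclideanSpace ℝ (Fin d)) (i : Fin n) : Finset (Fin n) :=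
  Finset.univ.filter fun j => (⟪z i, z j⟫ = ⨆ ℓ, ⟪z i, z ℓ⟫)

/-- The pure-attention hardmax transformer dynamics with step-size `α` and `A = I`:
`z_i^{k+1} = z_i^k + (α/(1+α)) ⬝ (1/|C_i^k|) ⬝ Σ_{j ∈ C_i^k} (z_j^k − z_i^k)`. -/
def IsDyn {d n : ℕ} (α : ℝ) (z : ℕ → Fin n → EuclideanSpace ℝ (Fin d)) : Prop :=
  ∀ k i, z (k + 1) i = z k i +
    (α / (1 + α)) • (((attn (z k) i).card : ℝ)⁻¹ • ∑ j ∈ attn (z k) i, (z k j - z k i))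

lemma attn_mem_iff {d n : ℕ} (z : Fin n → EuclideanSpace ℝ (Fin d)) (i j : Fin n) :
    j ∈ attn z i ↔ ⟪z i, z j⟫ = ⨆ ℓ, ⟪z i, z ℓ⟫ := by
  simp [attn]

lemma le_sup' {d n : ℕ} (z : Fin n → EuclideanSpace ℝ (Fin d)) (i ℓ : Fin n) :
    ⟪z i, z ℓ⟫ ≤ ⨆ m, ⟪z i, z m⟫ :=
  le_ciSup (f := fun m => ⟪z i, z m⟫) (Set.Finite.bddAbove (Set.finite_range _)) ℓ

lemma attn_nonempty {d n : ℕ} (hn : 0 < n) (z : Fin n → EuclideanSpace ℝ (Fin d)) (i : Fin n) :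
    (attn z i).Nonempty := by
  have : Nonempty (Fin n) := ⟨⟨0, hn⟩⟩
  obtain ⟨ℓ, hℓ⟩ := Finite.exists_max (fun ℓ => ⟪z i, z ℓ⟫)
  exact ⟨ℓ, (attn_mem_iff z i ℓ).2 (le_antisymm (le_sup' z i ℓ) (ciSup_le hℓ))⟩

lemma step_ne {d n : ℕ} (hn : 0 < n) {α : ℝ} (hα : 0 < α)
    (z : Fin n → EuclideanSpace ℝ (Fin d)) (i j : Fin n) (hij : z i ≠ z j)
    (h : z i + (α/(1+α)) • (((attn z i).card : ℝ)⁻¹ • ∑ l ∈ attn z i, (z l - z i))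
       = z j + (α/(1+α)) • (((attn z j).card : ℝ)⁻¹ • ∑ l ∈ attn z j, (z l - z j))) : False := by
  set c : ℝ := α/(1+α) with hc
  have h1α : (0:ℝ) < 1 + α := by linarith
  have hc0 : 0 < c := div_pos hα h1α
  have hc1 : c < 1 := (div_lt_one h1α).2 (by linarith)
  set m : Fin n → EuclideanSpace ℝ (Fin d) :=
    fun i => ((attn z i).card : ℝ)⁻¹ • ∑ l ∈ attn z i, z l with hm
  have hcardpos : ∀ i : Fin n, (0:ℝ) < (attn z i).card := fun i => by
    exact_mod_cast Finset.card_pos.2 (attn_nonempty hn z i)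
  -- rewrite the update
  have key : ∀ i : Fin n, ((attn z i).card : ℝ)⁻¹ • ∑ l ∈ attn z i, (z l - z i) = m i - z i := by
    intro i
    rw [Finset.sum_sub_distrib, Finset.sum_const, smul_sub, hm]
    congr 1
    rw [← Nat.cast_smul_eq_nsmul ℝ, smul_smul, inv_mul_cancel₀ (hcardpos i).ne', one_smul]
  rw [key i, key j] at h
  have hrel : (1 - c) • (z i - z j) = c • (m j - m i) := by
    linear_combination (norm := module) h
  -- inner product bounds
  have hinner : ∀ a b : Fin n, ⟪z a, m b⟫ ≤ ⨆ ℓ, ⟪z a, z ℓ⟫ := by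
    intro a b
    rw [hm]
    simp only [real_inner_smul_right, inner_sum]
    have : ∑ l ∈ attn z b, ⟪z a, z l⟫ ≤ (attn z b).card * (⨆ ℓ, ⟪z a, z ℓ⟫) := by
      calc ∑ l ∈ attn z b, ⟪z a, z l⟫ ≤ ∑ l ∈ attn z b, (⨆ ℓ, ⟪z a, z ℓ⟫) :=
            Finset.sum_le_sum (fun l _ => le_sup' z a l)
        _ = (attn z b).card * (⨆ ℓ, ⟪z a, z ℓ⟫) := by rw [Finset.sum_const, nsmul_eq_mul]
    calc ((attn z b).card : ℝ)⁻¹ * ∑ l ∈ attn z b, ⟪z a, z l⟫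
        ≤ ((attn z b).card : ℝ)⁻¹ * ((attn z b).card * (⨆ ℓ, ⟪z a, z ℓ⟫)) := by
          exact mul_le_mul_of_nonneg_left this (inv_nonneg.2 (hcardpos b).le)
      _ = ⨆ ℓ, ⟪z a, z ℓ⟫ := by
          rw [← mul_assoc, inv_mul_cancel₀ (hcardpos b).ne', one_mul]
  have hinner_eq : ∀ a : Fin n, ⟪z a, m a⟫ = ⨆ ℓ, ⟪z a, z ℓ⟫ := by
    intro a
    rw [hm]
    simp only [real_inner_smul_right, inner_sum]
    have : ∑ l ∈ attn z a, ⟪z a, z l⟫ = (attn z a).card * (⨆ ℓ, ⟪z a, z ℓ⟫) := by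
      rw [Finset.sum_congr rfl (fun l hl => (attn_mem_iff z a l).1 hl), Finset.sum_const,
        nsmul_eq_mul]
    rw [this, ← mul_assoc, inv_mul_cancel₀ (hcardpos a).ne', one_mul]
  have hle : ⟪z i - z j, m j - m i⟫ ≤ 0 := by
    rw [inner_sub_left, inner_sub_right, inner_sub_right]
    have h1 : ⟪z i, m j⟫ ≤ ⟪z i, m i⟫ := (hinner_eq i ▸ hinner i j)
    have h2 : ⟪z j, m i⟫ ≤ ⟪z j, m j⟫ := (hinner_eq j ▸ hinner j i)
    linarith
  have hnormpos : (0:ℝ) < ‖z i - z j‖^2 := by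
    exact pow_pos (norm_pos_iff.2 (sub_ne_zero.2 hij)) 2
  have : (1 - c) * ‖z i - z j‖^2 = c * ⟪z i - z j, m j - m i⟫ := by
    have h2 := congrArg (fun v => ⟪z i - z j, v⟫) hrel
    simp only [real_inner_smul_right, real_inner_self_eq_norm_sq] at h2
    exact h2
  nlinarith [mul_nonneg hc0.le (neg_nonneg.2 hle)]

/-- Tokens never collide: if the initial token values are pairwise distinct,
then they remain pairwise distinct for all times. -/
theorem tokens_never_collide {d n : ℕ} (hd : 0 < d) (hn : 0 < n) (α : ℝ) (hα : 0 < α)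
    (z : ℕ → Fin n → EuclideanSpace ℝ (Fin d)) (hdyn : IsDyn α z)
    (hdist : ∀ i j : Fin n, i ≠ j → z 0 i ≠ z 0 j) :
    ∀ (k : ℕ) (i j : Fin n), i ≠ j → z k i ≠ z k j := by
  intro k
  induction k with
  | zero => exact hdist
  | succ k ih =>
    intro i j hij h
    rw [hdyn k i, hdyn k j] at h
    exact step_ne hn hα (z k) i j (ih i j hij) h

end
end

section
/- For every token index i ∈ {1,…,n} the Euclidean norm of the token is nondecreasing along the dynamics: for all k ∈ ℕ and all ℓ ≥ k, ‖z_i^ℓ‖ ≥ ‖z_i^k‖. -/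
open scoped RealInnerProductSpace BigOperators Classical
open Filter Metric

noncomputable section

/-- The Euclidean norm of each token is nondecreasing along the dynamics. -/
theorem norm_nondecreasing {d n : ℕ} (hd : 0 < d) (hn : 0 < n) (α : ℝ) (hα : 0 < α)
    (z : ℕ → Fin n → EuclideanSpace ℝ (Fin d)) (hdyn : IsDyn α z) :
    ∀ (i : Fin n) (k ℓ : ℕ), k ≤ ℓ → ‖z k i‖ ≤ ‖z ℓ i‖ := by
  have step : ∀ (k : ℕ) (i : Fin n), ‖z k i‖ ≤ ‖z (k + 1) i‖ := by
    intro k i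
    have hne : Nonempty (Fin n) := ⟨⟨0, hn⟩⟩
    set v := z k i with hv
    have hterm : ∀ j ∈ attn (z k) i, 0 ≤ ⟪v, z k j - v⟫ := by
      intro j hj
      simp only [attn, Finset.mem_filter] at hj
      rw [inner_sub_right, hj.2, sub_nonneg]
      exact le_ciSup (f := fun ℓ => (⟪v, z k ℓ⟫ : ℝ)) (Set.Finite.bddAbove (Set.finite_range _)) i
    have hinner : ‖v‖ ^ 2 ≤ ⟪v, z (k + 1) i⟫ := by
      rw [hdyn k i, inner_add_right, inner_smul_right, inner_smul_right, inner_sum]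
      have hsum : 0 ≤ ∑ j ∈ attn (z k) i, ⟪v, z k j - v⟫ :=
        Finset.sum_nonneg hterm
      have hlam : 0 ≤ α / (1 + α) := by positivity
      have hc : (0:ℝ) ≤ (((attn (z k) i).card : ℝ))⁻¹ := by positivity
      have hprod : 0 ≤ α / (1 + α) * ((((attn (z k) i).card : ℝ))⁻¹ *
          ∑ j ∈ attn (z k) i, ⟪v, z k j - v⟫) :=
        mul_nonneg hlam (mul_nonneg hc hsum)
      have hself : ⟪v, v⟫ = ‖v‖ ^ 2 := real_inner_self_eq_norm_sq v
      linarith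
    have hcs := real_inner_le_norm v (z (k + 1) i)
    rcases eq_or_lt_of_le (norm_nonneg v) with h0 | hpos
    · rw [← h0]; exact norm_nonneg _
    · nlinarith
  intro i k ℓ hkl
  induction ℓ, hkl using Nat.le_induction with
  | base => exact le_refl _
  | succ m hm ih => exact le_trans ih (step m i)

end
end

section
/- The convex hull of the token values is nonincreasing in time with respect to set inclusion: for every k ∈ ℕ, co(Z^{k+1}) ⊆ co(Z^k). -/
open scoped RealInnerProductSpace BigOperators Classical
open Filter Metric

noncomputable section

/-! Each updated token is `z_i + c • (m_i - z_i)` with `m_i` the mean of the attended tokens and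
`c = α / (1 + α) ∈ [0, 1]`: a point of the segment from `z_i` to `m_i ∈ co(Z^k)`. -/

section Convex

variable {R E ι : Type*} [Field R] [LinearOrder R] [IsStrictOrderedRing R]
  [AddCommGroup E] [Module R E] {S : Set E}

theorem Convex.inv_card_smul_sum_mem (hS : Convex R S) {s : Finset ι} (hs : s.Nonempty)
    {f : ι → E} (hf : ∀ j ∈ s, f j ∈ S) : (s.card : R)⁻¹ • ∑ j ∈ s, f j ∈ S := by
  simpa [Finset.centerMass] using
    hS.centerMass_mem (w := fun _ => (1 : R)) (fun _ _ => zero_le_one) (by simpa using hs) hf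

theorem Convex.add_smul_inv_card_sum_sub_mem (hS : Convex R S) {x : E} (hx : x ∈ S)
    {s : Finset ι} {f : ι → E} (hf : ∀ j ∈ s, f j ∈ S) {c : R} (hc : c ∈ Set.Icc 0 1) :
    x + c • ((s.card : R)⁻¹ • ∑ j ∈ s, (f j - x)) ∈ S := by
  rcases s.eq_empty_or_nonempty with rfl | hs
  · simpa using hx
  have hcard : (s.card : R) ≠ 0 := Nat.cast_ne_zero.mpr hs.card_pos.ne'
  have hmean : (s.card : R)⁻¹ • ∑ j ∈ s, (f j - x) = (s.card : R)⁻¹ • ∑ j ∈ s, f j - x := by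
    rw [Finset.sum_sub_distrib, Finset.sum_const, ← Nat.cast_smul_eq_nsmul R, smul_sub,
      inv_smul_smul₀ hcard]
  rw [hmean]
  exact hS.add_smul_sub_mem hx (hS.inv_card_smul_sum_mem hs hf) hc

theorem div_one_add_mem_Icc {a : R} (ha : 0 ≤ a) : a / (1 + a) ∈ Set.Icc (0 : R) 1 :=
  ⟨by positivity, (div_le_one (by positivity)).2 (by linarith)⟩

end Convex

theorem convexHull_nonincreasing_general {d n : ℕ} (α : ℝ) (hα : 0 < α)
    (z : ℕ → Fin n → EuclideanSpace ℝ (Fin d)) (hdyn : IsDyn α z) :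
    ∀ k : ℕ, convexHull ℝ (Set.range (z (k + 1))) ⊆ convexHull ℝ (Set.range (z k)) := by
  intro k
  refine convexHull_min ?_ (convex_convexHull ℝ _)
  rintro _ ⟨i, rfl⟩
  rw [hdyn k i]
  exact (convex_convexHull ℝ _).add_smul_inv_card_sum_sub_mem
    (subset_convexHull ℝ _ (Set.mem_range_self i))
    (fun j _ => subset_convexHull ℝ _ (Set.mem_range_self j))
    (div_one_add_mem_Icc hα.le)

/-- The convex hull of the token values is nonincreasing in time. -/
theorem convexHull_nonincreasing {d n : ℕ} (hd : 0 < d) (hn : 0 < n) (α : ℝ) (hα : 0 < α)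
    (z : ℕ → Fin n → EuclideanSpace ℝ (Fin d)) (hdyn : IsDyn α z) :
    ∀ k : ℕ, convexHull ℝ (Set.range (z (k + 1))) ⊆ convexHull ℝ (Set.range (z k)) :=
  convexHull_nonincreasing_general α hα z hdyn

end
end

section
/- If x and y are both elements of S and there exists a subset J of the vertex set V such that x and y are each convex combinations of the points of J with all coefficients strictly positive, then x = y. In particular, for each fixed support set of vertices there is at most one element of S supported on it. -/
open scoped RealInnerProductSpace BigOperators Classical
open Filter Metric

noncomputable section

/-- The limiting set `K = ⋂ₖ co(Z^k)`, the intersection of the convex hulls of the token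
configurations over all times. -/
def limitK {d n : ℕ} (z : ℕ → Fin n → EuclideanSpace ℝ (Fin d)) :
    Set (EuclideanSpace ℝ (Fin d)) :=
  ⋂ k, convexHull ℝ (Set.range (z k))

/-- The cluster set `S = { x ∈ K : max_{v ∈ V} ⟪v − x, x⟫ = 0 }`, where `V` is the set of
extreme points (vertices) of `K`; `max … = 0` is phrased as: `0` is the greatest element of
the set of values `⟪v − x, x⟫`, `v ∈ V`. -/
def clusterSet {d : ℕ} (K : Set (EuclideanSpace ℝ (Fin d))) :
    Set (EuclideanSpace ℝ (Fin d)) :=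
  {x ∈ K | IsGreatest ((fun v => ⟪v - x, x⟫) '' (Set.extremePoints ℝ K)) 0}

lemma clusterSet_inner_eq {d : ℕ} {K : Set (EuclideanSpace ℝ (Fin d))}
    {x : EuclideanSpace ℝ (Fin d)} (hx : x ∈ clusterSet K)
    {J : Finset (EuclideanSpace ℝ (Fin d))}
    (hJ : (J : Set (EuclideanSpace ℝ (Fin d))) ⊆ Set.extremePoints ℝ K)
    {β : EuclideanSpace ℝ (Fin d) → ℝ}
    (hβpos : ∀ v ∈ J, 0 < β v) (hβsum : ∑ v ∈ J, β v = 1)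
    (hxJ : x = ∑ v ∈ J, β v • v) :
    ∀ v ∈ J, ⟪v, x⟫ = ⟪x, x⟫ := by
  have hub : ∀ v ∈ J, ⟪v - x, x⟫ ≤ 0 := by
    intro v hv
    exact hx.2.2 ⟨v, hJ hv, rfl⟩
  have hsum : ∑ v ∈ J, β v * ⟪v - x, x⟫ = 0 := by
    have : ∑ v ∈ J, β v * ⟪v - x, x⟫
        = ⟪x, x⟫ - (∑ v ∈ J, β v) * ⟪x, x⟫ := by
      simp only [inner_sub_left, mul_sub, Finset.sum_sub_distrib]
      rw [← Finset.sum_mul]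
      congr 1
      rw [hxJ, sum_inner]
      refine Finset.sum_congr rfl fun v hv => ?_
      rw [real_inner_smul_left]
    rw [this, hβsum, one_mul, sub_self]
  have hzero : ∀ v ∈ J, β v * ⟪v - x, x⟫ = 0 := by
    exact (Finset.sum_eq_zero_iff_of_nonpos fun v hv =>
      mul_nonpos_of_nonneg_of_nonpos (hβpos v hv).le (hub v hv)).mp hsum
  intro v hv
  have := hzero v hv
  have h2 : ⟪v - x, x⟫ = 0 := by
    rcases mul_eq_zero.mp this with h | h
    · exact absurd h (hβpos v hv).ne'
    · exact h
  rw [inner_sub_left] at h2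
  linarith

/-- For each fixed support set `J` of vertices of `K`, there is at most one element of `S`
which is a convex combination of the points of `J` with strictly positive coefficients. -/
theorem clusterSet_unique_on_support {d n : ℕ} (hd : 0 < d) (hn : 0 < n) (α : ℝ) (hα : 0 < α)
    (z : ℕ → Fin n → EuclideanSpace ℝ (Fin d)) (hdyn : IsDyn α z)
    (hdist : ∀ i j : Fin n, i ≠ j → z 0 i ≠ z 0 j) (hnz : ∀ i, z 0 i ≠ 0)
    (x y : EuclideanSpace ℝ (Fin d))
    (hx : x ∈ clusterSet (limitK z)) (hy : y ∈ clusterSet (limitK z))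
    (J : Finset (EuclideanSpace ℝ (Fin d)))
    (hJ : (J : Set (EuclideanSpace ℝ (Fin d))) ⊆ Set.extremePoints ℝ (limitK z))
    (β γ : EuclideanSpace ℝ (Fin d) → ℝ)
    (hβpos : ∀ v ∈ J, 0 < β v) (hβsum : ∑ v ∈ J, β v = 1) (hxJ : x = ∑ v ∈ J, β v • v)
    (hγpos : ∀ v ∈ J, 0 < γ v) (hγsum : ∑ v ∈ J, γ v = 1) (hyJ : y = ∑ v ∈ J, γ v • v) :
    x = y := by
  have hvx := clusterSet_inner_eq hx hJ hβpos hβsum hxJ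
  have hvy := clusterSet_inner_eq hy hJ hγpos hγsum hyJ
  have hyx : ⟪y, x⟫ = ⟪x, x⟫ := by
    rw [hyJ, sum_inner]
    calc ∑ v ∈ J, ⟪γ v • v, x⟫ = ∑ v ∈ J, γ v * ⟪x, x⟫ := by
          refine Finset.sum_congr rfl fun v hv => ?_
          rw [real_inner_smul_left, hvx v hv]
      _ = ⟪x, x⟫ := by rw [← Finset.sum_mul, hγsum, one_mul]
  have hxy : ⟪x, y⟫ = ⟪y, y⟫ := by
    rw [hxJ, sum_inner]
    calc ∑ v ∈ J, ⟪β v • v, y⟫ = ∑ v ∈ J, β v * ⟪y, y⟫ := by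
          refine Finset.sum_congr rfl fun v hv => ?_
          rw [real_inner_smul_left, hvy v hv]
      _ = ⟪y, y⟫ := by rw [← Finset.sum_mul, hβsum, one_mul]
  have : ⟪x - y, x - y⟫ = 0 := by
    rw [inner_sub_left, inner_sub_right, inner_sub_right,
      real_inner_comm y x] at *
    linarith
  exact sub_eq_zero.mp (inner_self_eq_zero.mp this)

end
end

section
/- For all token indices i and all times k ∈ ℕ, the increase of the squared norm of a token along one step of the dynamics satisfies ‖z_i^{k+1}‖² − ‖z_i^k‖² ≥ (2α/(1+α)) · max_{ℓ∈{1,…,n}} ⟨z_ℓ^k − z_i^k, z_i^k⟩. -/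
open scoped RealInnerProductSpace BigOperators Classical
open Filter Metric

noncomputable section

/-- One-step increase of the squared norm of a token:
`‖z_i^{k+1}‖² − ‖z_i^k‖² ≥ (2α/(1+α))·max_ℓ ⟪z_ℓ^k − z_i^k, z_i^k⟫`. -/
theorem sq_norm_one_step_increase {d n : ℕ} (hd : 0 < d) (hn : 0 < n) (α : ℝ) (hα : 0 < α)
    (z : ℕ → Fin n → EuclideanSpace ℝ (Fin d)) (hdyn : IsDyn α z) :
    ∀ (i : Fin n) (k : ℕ),
      (2 * α / (1 + α)) * (⨆ ℓ, ⟪z k ℓ - z k i, z k i⟫) ≤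
        ‖z (k + 1) i‖ ^ 2 - ‖z k i‖ ^ 2 := by
  intro i k
  haveI : Nonempty (Fin n) := Fin.pos_iff_nonempty.mp hn
  set x : EuclideanSpace ℝ (Fin d) := z k i with hx
  set f : Fin n → ℝ := fun ℓ => ⟪x, z k ℓ⟫ with hf
  have hbf : BddAbove (Set.range f) := (Set.finite_range f).bddAbove
  set M : ℝ := ⨆ ℓ, f ℓ with hM
  -- attn is nonempty
  obtain ⟨j0, hj0⟩ := exists_eq_ciSup_of_finite (f := f)
  have hj0' : j0 ∈ attn (z k) i := by
    simp [attn, hf] at hj0 ⊢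
    exact hj0
  have hcard : 0 < (attn (z k) i).card := Finset.card_pos.mpr ⟨j0, hj0'⟩
  have hcardR : (0:ℝ) < ((attn (z k) i).card : ℝ) := by exact_mod_cast hcard
  -- the sup on the LHS
  have hg : ∀ ℓ, ⟪z k ℓ - x, x⟫ = f ℓ - ‖x‖^2 := by
    intro ℓ
    rw [inner_sub_left, real_inner_comm, real_inner_self_eq_norm_sq]
  have hsup : (⨆ ℓ, ⟪z k ℓ - x, x⟫) = M - ‖x‖^2 := by
    apply le_antisymm
    · apply ciSup_le
      intro ℓ
      rw [hg]
      have := le_ciSup hbf ℓ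
      linarith
    · rw [sub_le_iff_le_add]
      rw [hM]
      apply ciSup_le
      intro ℓ
      have := le_ciSup ((Set.finite_range _).bddAbove)
        (f := fun ℓ => ⟪z k ℓ - x, x⟫) ℓ
      rw [hg] at this
      linarith
  -- inner product with displacement
  set C := attn (z k) i with hC
  have hterm : ∀ j ∈ C, ⟪x, z k j - x⟫ = M - ‖x‖^2 := by
    intro j hj
    rw [hC, attn, Finset.mem_filter] at hj
    have hj2 : f j = M := hj.2
    rw [inner_sub_right, real_inner_self_eq_norm_sq]
    rw [show ⟪x, z k j⟫ = f j from rfl, hj2]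
  have hsum : ⟪x, ∑ j ∈ C, (z k j - z k i)⟫ = (C.card : ℝ) * (M - ‖x‖^2) := by
    rw [inner_sum, Finset.sum_congr rfl hterm, Finset.sum_const, nsmul_eq_mul]
  have hstep := hdyn k i
  rw [hstep]
  rw [norm_add_sq_real]
  have hinner : ⟪x, (α / (1 + α)) • (((C.card : ℝ))⁻¹ • ∑ j ∈ C, (z k j - z k i))⟫
      = (α / (1 + α)) * (M - ‖x‖^2) := by
    rw [inner_smul_right, inner_smul_right, hsum]
    field_simp
  rw [hsup, hinner]
  have hn2 : (0:ℝ) ≤ ‖(α / (1 + α)) • (((C.card : ℝ))⁻¹ • ∑ j ∈ C, (z k j - z k i))‖^2 :=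
    sq_nonneg _
  ring_nf
  nlinarith [hn2]

end
end

section
/- Every point s ∈ S that is not a vertex of K is the orthogonal projection of the origin onto the affine hull of a set of vertices of K: letting I = { v ∈ V : ⟨v, s⟩ = ‖s‖² }, the point s lies in the affine hull of I and ⟨v − s, s⟩ = 0 for all v ∈ I, so s is the unique point of minimal Euclidean norm in the affine hull of I. -/
/-!
Only the convex geometry of `K` matters: it is compact and convex, as an intersection of convex
hulls of finite sets. The condition `s ∈ S` bounds the functional `⟪·, s⟫` by `‖s‖²` on the
vertices, hence on all of `K` by Krein–Milman, so `s` lies in the exposed face `F` of `K` where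
the bound is attained. Krein–Milman for `F` puts `s` in the affine span of the extreme points of
`F`, which are vertices of `K` lying in `I`. Finally `s` is orthogonal to the direction of the
affine span of `I`, so Pythagoras makes it the point of least norm there.
-/

open scoped RealInnerProductSpace BigOperators Classical
open Filter Metric

noncomputable section

section KreinMilman

variable {E : Type*} [AddCommGroup E] [Module ℝ E] [TopologicalSpace E] [T2Space E]
  [IsTopologicalAddGroup E] [ContinuousSMul ℝ E] [LocallyConvexSpace ℝ E] {K : Set E}

theorem IsCompact.subset_of_extremePoints_subset (hK : IsCompact K) (hKconv : Convex ℝ K)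
    {C : Set E} (hC : IsClosed C) (hCconv : Convex ℝ C) (hKC : K.extremePoints ℝ ⊆ C) :
    K ⊆ C := by
  rw [← closure_convexHull_extremePoints hK hKconv]
  exact closure_minimal (convexHull_min hKC hCconv) hC

end KreinMilman

section FiniteDimensional

variable {E : Type*} [NormedAddCommGroup E] [NormedSpace ℝ E] [FiniteDimensional ℝ E]
  {K : Set E}

theorem IsCompact.subset_affineSpan_extremePoints (hK : IsCompact K) (hKconv : Convex ℝ K) :
    K ⊆ affineSpan ℝ (K.extremePoints ℝ) :=
  hK.subset_of_extremePoints_subset hKconv (affineSpan ℝ _).closed_of_finiteDimensional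
    (affineSpan ℝ _).convex (subset_affineSpan ℝ _)

theorem IsCompact.mem_affineSpan_extremePoints_of_forall_le (hK : IsCompact K)
    (hKconv : Convex ℝ K) (l : E →L[ℝ] ℝ) {s : E} (hs : s ∈ K)
    (hle : ∀ v ∈ K.extremePoints ℝ, l v ≤ l s) :
    s ∈ affineSpan ℝ {v ∈ K.extremePoints ℝ | l v = l s} := by
  have hKle : K ⊆ {x | l x ≤ l s} :=
    hK.subset_of_extremePoints_subset hKconv (isClosed_le l.continuous continuous_const)
      (convex_halfSpace_le l.isLinear _) hle
  have hF : IsExposed ℝ K (l.toExposed K) := ContinuousLinearMap.toExposed.isExposed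
  refine affineSpan_mono ℝ ?_ <|
    (hF.isCompact hK).subset_affineSpan_extremePoints (hF.convex hKconv) ⟨hs, hKle⟩
  intro v hv
  have hvF : v ∈ l.toExposed K := extremePoints_subset hv
  exact ⟨hF.isExtreme.extremePoints_subset_extremePoints hv,
    le_antisymm (hKle hvF.1) (hvF.2 s hs)⟩

end FiniteDimensional

section Projection

variable {E : Type*} [NormedAddCommGroup E] [InnerProductSpace ℝ E]

theorem norm_lt_norm_of_mem_affineSpan_of_inner_eq_zero {I : Set E} {s y : E}
    (hI : ∀ v ∈ I, ⟪v - s, s⟫ = 0) (hs : s ∈ affineSpan ℝ I) (hy : y ∈ affineSpan ℝ I)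
    (hne : y ≠ s) : ‖s‖ < ‖y‖ := by
  have hspan : vectorSpan ℝ I ≤ (ℝ ∙ s)ᗮ := by
    rw [vectorSpan_def, Submodule.span_le]
    rintro _ ⟨v, hv, w, hw, rfl⟩
    rw [SetLike.mem_coe, Submodule.mem_orthogonal_singleton_iff_inner_left]
    show ⟪v - w, s⟫ = 0
    rw [← sub_sub_sub_cancel_right v w s, inner_sub_left, hI v hv, hI w hw, sub_zero]
  have horth : ⟪y - s, s⟫ = 0 :=
    (Submodule.mem_orthogonal_singleton_iff_inner_left).1
      (hspan (vsub_mem_vectorSpan_of_mem_affineSpan_of_mem_affineSpan hy hs))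
  have hpyth : ‖y‖ * ‖y‖ = ‖y - s‖ * ‖y - s‖ + ‖s‖ * ‖s‖ := by
    simpa using norm_add_sq_eq_norm_sq_add_norm_sq_real horth
  have hpos : 0 < ‖y - s‖ := norm_pos_iff.2 (sub_ne_zero.2 hne)
  exact (mul_self_lt_mul_self_iff (norm_nonneg _) (norm_nonneg _)).2 (by nlinarith)

end Projection

theorem isCompact_limitK {d n : ℕ} (z : ℕ → Fin n → EuclideanSpace ℝ (Fin d)) :
    IsCompact (limitK z) :=
  ((Set.finite_range (z 0)).isCompact_convexHull ℝ).of_isClosed_subset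
    (isClosed_iInter fun k => (Set.finite_range (z k)).isClosed_convexHull ℝ)
    (Set.iInter_subset _ 0)

theorem convex_limitK {d n : ℕ} (z : ℕ → Fin n → EuclideanSpace ℝ (Fin d)) :
    Convex ℝ (limitK z) :=
  convex_iInter fun _ => convex_convexHull ℝ _

theorem nonvertex_cluster_is_projection_general {d n : ℕ}
    (z : ℕ → Fin n → EuclideanSpace ℝ (Fin d))
    (s : EuclideanSpace ℝ (Fin d)) (hs : s ∈ clusterSet (limitK z)) :
    let I : Set (EuclideanSpace ℝ (Fin d)) :=
      {v ∈ Set.extremePoints ℝ (limitK z) | ⟪v, s⟫ = ‖s‖ ^ 2}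
    s ∈ affineSpan ℝ I ∧ (∀ v ∈ I, ⟪v - s, s⟫ = (0 : ℝ)) ∧
      ∀ y ∈ affineSpan ℝ I, y ≠ s → ‖s‖ < ‖y‖ := by
  intro I
  obtain ⟨hsK, -, hmax⟩ := hs
  have hI : ∀ v ∈ I, ⟪v - s, s⟫ = 0 := fun v hv => by
    rw [inner_sub_left, hv.2, real_inner_self_eq_norm_sq, sub_self]
  have hIeq : {v ∈ Set.extremePoints ℝ (limitK z) | innerSL ℝ s v = innerSL ℝ s s} = I := by
    simp only [innerSL_apply_apply, real_inner_comm s, real_inner_self_eq_norm_sq, I]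
  have hspan : s ∈ affineSpan ℝ I := by
    refine hIeq ▸ (isCompact_limitK z).mem_affineSpan_extremePoints_of_forall_le
      (convex_limitK z) (innerSL ℝ s) hsK fun v hv => ?_
    have hvs : ⟪v - s, s⟫ ≤ 0 := hmax ⟨v, hv, rfl⟩
    rw [inner_sub_left, sub_nonpos, real_inner_comm] at hvs
    simpa only [innerSL_apply_apply] using hvs
  exact ⟨hspan, hI, fun y hy hne => norm_lt_norm_of_mem_affineSpan_of_inner_eq_zero hI hspan hy hne⟩

/-- Every non-vertex point `s ∈ S` is the orthogonal projection of the origin onto the affine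
hull of the set `I = { v ∈ V : ⟪v, s⟫ = ‖s‖² }` of vertices: `s` lies in the affine hull of
`I`, `⟪v − s, s⟫ = 0` for all `v ∈ I`, and `s` is the unique point of minimal norm there. -/
theorem nonvertex_cluster_is_projection {d n : ℕ} (hd : 0 < d) (hn : 0 < n) (α : ℝ) (hα : 0 < α)
    (z : ℕ → Fin n → EuclideanSpace ℝ (Fin d)) (hdyn : IsDyn α z)
    (hdist : ∀ i j : Fin n, i ≠ j → z 0 i ≠ z 0 j) (hnz : ∀ i, z 0 i ≠ 0)
    (s : EuclideanSpace ℝ (Fin d)) (hs : s ∈ clusterSet (limitK z))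
    (hsv : s ∉ Set.extremePoints ℝ (limitK z)) :
    let I : Set (EuclideanSpace ℝ (Fin d)) :=
      {v ∈ Set.extremePoints ℝ (limitK z) | ⟪v, s⟫ = ‖s‖ ^ 2}
    s ∈ affineSpan ℝ I ∧ (∀ v ∈ I, ⟪v - s, s⟫ = (0 : ℝ)) ∧
      ∀ y ∈ affineSpan ℝ I, y ≠ s → ‖s‖ < ‖y‖ :=
  nonvertex_cluster_is_projection_general z s hs
end
end
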